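/- arXiv:2602.04052 — 5 statements merged into one kernel-verified Lean document; each statement's English description precedes it below -/
import Mathlib

section
/- Let a and b be coprime integers with a ≥ 2 and b ≥ 2, let S = ⟨a,b⟩ and let F = a*b − a − b. Then for every integer z with 0 ≤ z ≤ F, one has z ∈ S if and only if F − z ∉ S; in other words, the two-generator numerical semigroup ⟨a,b⟩ is symmetric. -/
/-- The two-generator numerical semigroup `⟨a,b⟩`. -/
def numSgp (a b : ℕ) : Set ℕ := {n : ℕ | ∃ x y : ℕ, n = a * x + b * y}

lemma mem_int (a b : ℕ) (n : ℕ) :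
    n ∈ numSgp a b ↔ ∃ x y : ℤ, 0 ≤ x ∧ 0 ≤ y ∧ (n : ℤ) = a * x + b * y := by
  constructor
  · rintro ⟨x, y, rfl⟩
    exact ⟨x, y, by positivity, by positivity, by push_cast; ring⟩
  · rintro ⟨x, y, hx, hy, h⟩
    refine ⟨x.toNat, y.toNat, ?_⟩
    have h2 : (n : ℤ) = ((a * x.toNat + b * y.toNat : ℕ) : ℤ) := by
      push_cast
      rw [Int.toNat_of_nonneg hx, Int.toNat_of_nonneg hy]
      exact h
    exact_mod_cast h2

lemma repr_exists (a b : ℕ) (hb : 0 < b) (hab : Nat.Coprime a b) (n : ℤ) :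
    ∃ x y : ℤ, 0 ≤ x ∧ x < b ∧ n = a * x + b * y := by
  have hco : IsCoprime (a : ℤ) (b : ℤ) := Int.isCoprime_iff_gcd_eq_one.mpr hab
  obtain ⟨u, v, huv⟩ := hco
  have hbz : (0 : ℤ) < b := by exact_mod_cast hb
  set x := (n * u) % b with hx
  have hx0 : 0 ≤ x := Int.emod_nonneg _ (by positivity)
  have hxb : x < b := Int.emod_lt_of_pos _ hbz
  obtain ⟨q, hq⟩ : (b : ℤ) ∣ (n * u - x) := Int.dvd_self_sub_of_emod_eq rfl
  refine ⟨x, n * v + a * q, hx0, hxb, ?_⟩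
  have : n * (u * a + v * b) = n := by rw [huv]; ring
  nlinarith [this, hq]

lemma crit (a b : ℕ) (hb : 0 < b) (hab : Nat.Coprime a b) (x y : ℤ)
    (hx0 : 0 ≤ x) (hxb : x < b) :
    (∃ x' y' : ℤ, 0 ≤ x' ∧ 0 ≤ y' ∧ (a:ℤ) * x + b * y = a * x' + b * y') ↔ 0 ≤ y := by
  have hbz : (0 : ℤ) < b := by exact_mod_cast hb
  constructor
  · rintro ⟨x', y', hx', hy', h⟩
    have hco : IsCoprime (a : ℤ) (b : ℤ) := Int.isCoprime_iff_gcd_eq_one.mpr hab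
    have hdvd : (b:ℤ) ∣ (x' - x) := by
      have h1 : (b:ℤ) ∣ (a:ℤ) * (x' - x) := ⟨y - y', by linarith [h]⟩
      exact hco.symm.dvd_of_dvd_mul_left h1
    obtain ⟨k, hk⟩ := hdvd
    have hk0 : 0 ≤ k := by nlinarith
    have hy : y = y' + a * k := by
      have : (b:ℤ) * y = b * (y' + a * k) := by nlinarith
      exact mul_left_cancel₀ (ne_of_gt hbz) this
    have : 0 ≤ (a:ℤ) * k := by positivity
    linarith
  · intro hy; exact ⟨x, y, hx0, hy, rfl⟩

/-- For coprime `a, b ≥ 2` with `F = a*b - a - b`, the semigroup `⟨a,b⟩` is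
symmetric: for `0 ≤ z ≤ F`, `z ∈ ⟨a,b⟩ ↔ F - z ∉ ⟨a,b⟩`. -/
theorem two_generator_symmetric (a b : ℕ) (ha : 2 ≤ a) (hb : 2 ≤ b)
    (hab : Nat.Coprime a b) :
    ∀ z : ℕ, z ≤ a * b - a - b →
      (z ∈ numSgp a b ↔ (a * b - a - b) - z ∉ numSgp a b) := by
  intro z hz
  have hab' : a + b ≤ a * b := by nlinarith
  have hF : ((a * b - a - b : ℕ) : ℤ) = (a:ℤ) * b - a - b := by
    omega
  have hFz : ((a * b - a - b - z : ℕ) : ℤ) = (a:ℤ) * b - a - b - z := by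
    omega
  obtain ⟨x, y, hx0, hxb, hxy⟩ := repr_exists a b (by omega) hab (z : ℤ)
  have h1 : z ∈ numSgp a b ↔ 0 ≤ y := by
    rw [mem_int]
    rw [← crit a b (by omega) hab x y hx0 hxb]
    constructor
    · rintro ⟨x', y', h1, h2, h3⟩; exact ⟨x', y', h1, h2, by rw [← hxy]; exact h3⟩
    · rintro ⟨x', y', h1, h2, h3⟩; exact ⟨x', y', h1, h2, by rw [hxy]; exact h3⟩
  have h2 : (a * b - a - b) - z ∈ numSgp a b ↔ 0 ≤ (-1 - y : ℤ) := by
    rw [mem_int]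
    have hx0' : (0:ℤ) ≤ (b:ℤ) - 1 - x := by linarith
    have hxb' : (b:ℤ) - 1 - x < b := by linarith
    rw [← crit a b (by omega) hab ((b:ℤ) - 1 - x) (-1 - y) hx0' hxb']
    have heq : ((a * b - a - b - z : ℕ) : ℤ) = (a:ℤ) * ((b:ℤ) - 1 - x) + b * (-1 - y) := by
      rw [hFz, hxy]; ring
    constructor
    · rintro ⟨x', y', g1, g2, g3⟩; exact ⟨x', y', g1, g2, by rw [← heq]; exact g3⟩
    · rintro ⟨x', y', g1, g2, g3⟩; exact ⟨x', y', g1, g2, by rw [heq]; exact g3⟩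
  rw [h1, h2]
  omega
end

section
/- Let a and b be coprime integers with a ≥ 2 and b ≥ 2. Then the number of natural numbers not representable as a*x + b*y with x, y nonnegative integers (the genus of ⟨a,b⟩) equals (a−1)*(b−1)/2. -/
section GenusAux

variable {a b : ℕ}

private lemma rep_iff_mem_closure (n : ℕ) :
    (∃ x y : ℕ, n = a * x + b * y) ↔ n ∈ AddSubmonoid.closure ({a, b} : Set ℕ) := by
  rw [AddSubmonoid.mem_closure_pair]
  constructor
  · rintro ⟨x, y, rfl⟩
    exact ⟨x, y, by simp only [smul_eq_mul]; ring⟩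
  · rintro ⟨x, y, h⟩
    exact ⟨x, y, by simp only [smul_eq_mul] at h; rw [← h]; ring⟩

private lemma not_rep_F (ha : 2 ≤ a) (hb : 2 ≤ b) (hab : Nat.Coprime a b) :
    ¬∃ x y : ℕ, a * b - a - b = a * x + b * y := by
  rw [rep_iff_mem_closure]
  exact (frobeniusNumber_pair hab (by omega) (by omega)).1

private lemma le_F_of_not_rep (ha : 2 ≤ a) (hb : 2 ≤ b) (hab : Nat.Coprime a b)
    {n : ℕ} (h : ¬∃ x y : ℕ, n = a * x + b * y) : n ≤ a * b - a - b := by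
  rw [rep_iff_mem_closure] at h
  exact (frobeniusNumber_pair hab (by omega) (by omega)).2 h

/-- If `n` is representable and `n ≤ F`, then `F - n` is not representable. -/
private lemma not_rep_compl (ha : 2 ≤ a) (hb : 2 ≤ b) (hab : Nat.Coprime a b)
    {n : ℕ} (hn : n ≤ a * b - a - b) (h : ∃ x y : ℕ, n = a * x + b * y) :
    ¬∃ x y : ℕ, a * b - a - b - n = a * x + b * y := by
  rintro ⟨x2, y2, h2⟩
  obtain ⟨x1, y1, h1⟩ := h
  exact not_rep_F ha hb hab ⟨x1 + x2, y1 + y2,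
    by rw [show a * b - a - b = n + (a * b - a - b - n) from by omega, h2, h1]; ring⟩

/-- If `n ≤ F` is not representable, then `F - n` is representable. -/
private lemma rep_compl (ha : 2 ≤ a) (hb : 2 ≤ b) (hab : Nat.Coprime a b)
    {n : ℕ} (hn : n ≤ a * b - a - b) (h : ¬∃ x y : ℕ, n = a * x + b * y) :
    ∃ x y : ℕ, a * b - a - b - n = a * x + b * y := by
  haveI : NeZero b := ⟨by omega⟩
  -- find x < b with a * x ≡ n [MOD b]
  set u : (ZMod b)ˣ := ZMod.unitOfCoprime a hab with hu
  set x : ℕ := (((u⁻¹ : (ZMod b)ˣ) : ZMod b) * (n : ZMod b)).val with hxdef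
  have hx : x < b := ZMod.val_lt _
  have hmod : (a * x : ZMod b) = (n : ZMod b) := by
    push_cast
    rw [hxdef, ZMod.natCast_val, ZMod.cast_id, ← mul_assoc]
    have hone : (a : ZMod b) * ((u⁻¹ : (ZMod b)ˣ) : ZMod b) = 1 := by
      rw [← ZMod.coe_unitOfCoprime a hab, ← hu, ← Units.val_mul, mul_inv_cancel, Units.val_one]
    rw [hone, one_mul]
  have hmodeq : a * x ≡ n [MOD b] := by
    rw [← ZMod.natCast_eq_natCast_iff]
    push_cast
    exact hmod
  -- if a*x ≤ n then n would be representable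
  have hlt : n < a * x := by
    by_contra hle
    push_neg at hle
    obtain ⟨m, hm⟩ := (Nat.modEq_iff_dvd' hle).mp hmodeq
    exact h ⟨x, m, by omega⟩
  obtain ⟨m, hm⟩ := (Nat.modEq_iff_dvd' hlt.le).mp hmodeq.symm
  have e3 : a * x = b * m + n := by omega
  have hm1 : 1 ≤ m := by
    rcases Nat.eq_zero_or_pos m with rfl | h1
    · simp at e3; omega
    · exact h1
  refine ⟨b - 1 - x, m - 1, ?_⟩
  have e1 : a * (b - 1 - x) + a * x + a = a * b := by
    have hbx : (b - 1 - x) + x + 1 = b := by omega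
    calc a * (b - 1 - x) + a * x + a = a * ((b - 1 - x) + x + 1) := by ring
      _ = a * b := by rw [hbx]
  have e2 : b * (m - 1) + b = b * m := by
    have hmm : (m - 1) + 1 = m := by omega
    calc b * (m - 1) + b = b * ((m - 1) + 1) := by ring
      _ = b * m := by rw [hmm]
  omega

end GenusAux

/-- For coprime `a, b ≥ 2`, the number of natural numbers not representable as
`a*x + b*y` (the genus of `⟨a,b⟩`) equals `(a-1)*(b-1)/2`. -/
theorem genus_two_generators (a b : ℕ) (ha : 2 ≤ a) (hb : 2 ≤ b)
    (hab : Nat.Coprime a b) :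
    {n : ℕ | ¬∃ x y : ℕ, n = a * x + b * y}.ncard = (a - 1) * (b - 1) / 2 := by
  classical
  set F : ℕ := a * b - a - b with hF
  set G : Finset ℕ := (Finset.range (F + 1)).filter (fun n => ¬∃ x y : ℕ, n = a * x + b * y)
    with hG
  set R : Finset ℕ := (Finset.range (F + 1)).filter (fun n => ∃ x y : ℕ, n = a * x + b * y)
    with hR
  have hset : {n : ℕ | ¬∃ x y : ℕ, n = a * x + b * y} = ↑G := by
    ext n
    simp only [hG, Set.mem_setOf_eq, Finset.coe_filter, Finset.mem_range]
    constructor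
    · intro hn
      exact ⟨by have := le_F_of_not_rep ha hb hab hn; omega, hn⟩
    · exact fun h => h.2
  rw [hset, Set.ncard_coe_finset]
  -- bijection between G and R via n ↦ F - n
  have hcard : G.card = R.card := by
    apply Finset.card_bij (fun n _ => F - n)
    · intro n hn
      simp only [hG, Finset.mem_filter, Finset.mem_range] at hn
      simp only [hR, Finset.mem_filter, Finset.mem_range]
      exact ⟨by omega, rep_compl ha hb hab (by omega) hn.2⟩
    · intro n hn m hm hnm
      simp only [hG, Finset.mem_filter, Finset.mem_range] at hn hm
      omega
    · intro r hr
      simp only [hR, Finset.mem_filter, Finset.mem_range] at hr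
      refine ⟨F - r, ?_, by omega⟩
      simp only [hG, Finset.mem_filter, Finset.mem_range]
      refine ⟨by omega, fun hrep => ?_⟩
      have hnr := not_rep_compl ha hb hab (n := F - r) (by omega) hrep
      rw [show F - (F - r) = r from by omega] at hnr
      exact hnr hr.2
  have hsum : R.card + G.card = F + 1 := by
    have h := Finset.card_filter_add_card_filter_not
      (s := Finset.range (F + 1)) (p := fun n => ∃ x y : ℕ, n = a * x + b * y)
    rw [Finset.card_range] at h
    rw [hR, hG]
    convert h using 3
  have hF1 : F + 1 = (a - 1) * (b - 1) := by
    have h1 : a + b ≤ a * b := by nlinarith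
    rw [hF, Nat.sub_sub]
    zify [h1, show 1 ≤ a by omega, show 1 ≤ b by omega]
    ring
  omega
end

section
/- Let a ≥ 2, d ≥ 1, and w ≥ 1 be integers with gcd(a, d) = 1, and let S = ⟨a, a+d, a+2d, …, a+w·d⟩ be the numerical semigroup generated by the arithmetic progression a, a+d, …, a+w·d. Then the Frobenius number of S is F(S) = ⌊(a−2)/w⌋·a + d·(a−1). -/
/-!
An element of `⟨a, a + d, …, a + w d⟩` is a sum of `m` generators, i.e. `m a + t d` with
`t ≤ m w`, and conversely. Since `d` is invertible modulo `a`, every `n` is `m a + t d` for a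
unique residue `t < a`, so `n` lies in the semigroup iff `t ≤ m w`. For `n > F` the quotient `m`
exceeds `q := ⌊(a - 2)/w⌋`, and `(q + 1) w ≥ a - 1 ≥ t`. For `n = F = q a + (a - 1) d` the residue
is `a - 1`, while `m = q` allows only `t ≤ q w ≤ a - 2`.
-/

theorem Nat.exists_lt_mul_modEq_of_coprime {a d : ℕ} (ha : 0 < a) (had : a.Coprime d) (n : ℕ) :
    ∃ t < a, t * d ≡ n [MOD a] := by
  have : NeZero a := ⟨ha.ne'⟩
  let u := ZMod.unitOfCoprime d had.symm
  refine ⟨((n : ZMod a) * ↑u⁻¹).val, ZMod.val_lt _, ?_⟩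
  rw [← ZMod.natCast_eq_natCast_iff]
  push_cast
  rw [ZMod.natCast_zmod_val, mul_assoc, show (d : ZMod a) = u from rfl, Units.inv_mul, mul_one]

def arithProgSemigroup (a d w : ℕ) : AddSubmonoid ℕ :=
  AddSubmonoid.closure {x : ℕ | ∃ i ≤ w, x = a + i * d}

namespace arithProgSemigroup

variable {a d w : ℕ}

theorem exists_eq_of_mem {n : ℕ} (hn : n ∈ arithProgSemigroup a d w) :
    ∃ m t, t ≤ m * w ∧ n = m * a + t * d := by
  induction hn using AddSubmonoid.closure_induction with
  | mem x hx =>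
    obtain ⟨i, hi, rfl⟩ := hx
    exact ⟨1, i, by omega, by ring⟩
  | zero => exact ⟨0, 0, by simp, by ring⟩
  | add x y _ _ hx hy =>
    obtain ⟨m₁, t₁, h₁, rfl⟩ := hx
    obtain ⟨m₂, t₂, h₂, rfl⟩ := hy
    exact ⟨m₁ + m₂, t₁ + t₂, by rw [add_mul]; omega, by ring⟩

theorem mul_add_mul_mem {m t : ℕ} (ht : t ≤ m * w) :
    m * a + t * d ∈ arithProgSemigroup a d w := by
  induction m generalizing t with
  | zero =>
    obtain rfl : t = 0 := by simpa using ht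
    simp
  | succ m ih =>
    obtain ⟨r, s, hr, hs, rfl⟩ : ∃ r s, r ≤ w ∧ s ≤ m * w ∧ t = r + s :=
      ⟨min t w, t - min t w, min_le_right t w, by rw [add_mul] at ht; omega, by omega⟩
    have hgen : a + r * d ∈ arithProgSemigroup a d w := AddSubmonoid.subset_closure ⟨r, hr, rfl⟩
    have hsplit : (m + 1) * a + (r + s) * d = (a + r * d) + (m * a + s * d) := by ring
    rw [hsplit]
    exact add_mem hgen (ih hs)

theorem mem_iff {n : ℕ} :
    n ∈ arithProgSemigroup a d w ↔ ∃ m t, t ≤ m * w ∧ n = m * a + t * d :=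
  ⟨exists_eq_of_mem, fun ⟨_, _, ht, hn⟩ => hn ▸ mul_add_mul_mem ht⟩

theorem frobenius_notMem (ha : 2 ≤ a) (had : a.Coprime d) :
    (a - 2) / w * a + (a - 1) * d ∉ arithProgSemigroup a d w := by
  intro h
  obtain ⟨m, t, htm, hrep⟩ := mem_iff.1 h
  have hmod : t * d ≡ (a - 1) * d [MOD a] :=
    calc t * d % a = (m * a + t * d) % a := by simp
      _ = ((a - 2) / w * a + (a - 1) * d) % a := by rw [hrep]
      _ = (a - 1) * d % a := by simp
  have hta : a - 1 ≤ t := by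
    have hres : t % a = a - 1 := by
      rw [Nat.ModEq.cancel_right_of_coprime had hmod, Nat.mod_eq_of_lt (by omega)]
    exact hres ▸ Nat.mod_le t a
  have hmq : m ≤ (a - 2) / w := by
    refine Nat.le_of_mul_le_mul_right ?_ (by omega : 0 < a)
    have := Nat.mul_le_mul_right d hta
    omega
  have := Nat.mul_le_mul_right w hmq
  have := Nat.div_mul_le_self (a - 2) w
  omega

theorem mem_of_frobenius_lt (ha : 0 < a) (hw : 0 < w) (had : a.Coprime d) {n : ℕ}
    (hn : (a - 2) / w * a + (a - 1) * d < n) : n ∈ arithProgSemigroup a d w := by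
  obtain ⟨t, hta, hmod⟩ := Nat.exists_lt_mul_modEq_of_coprime ha had n
  have htd : t * d ≤ (a - 1) * d := Nat.mul_le_mul_right d (by omega)
  obtain ⟨m, hm⟩ := (Nat.modEq_iff_dvd' (by omega)).mp hmod
  have hqm : (a - 2) / w < m := by
    refine Nat.lt_of_mul_lt_mul_right (a := a) ?_
    rw [mul_comm m]
    omega
  have htm : t ≤ m * w :=
    calc t ≤ (a - 2) / w * w + w := by have := Nat.lt_div_mul_add (a := a - 2) hw; omega
      _ = ((a - 2) / w + 1) * w := by ring
      _ ≤ m * w := Nat.mul_le_mul_right w hqm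
  exact mem_iff.2 ⟨m, t, htm, by rw [mul_comm m]; omega⟩

end arithProgSemigroup

theorem frobenius_arithmetic_progression_general (a d w : ℕ) (ha : 2 ≤ a)
    (hw : 1 ≤ w) (had : Nat.gcd a d = 1) :
    IsGreatest
      {n : ℕ | n ∉ AddSubmonoid.closure {x : ℕ | ∃ i ≤ w, x = a + i * d}}
      ((a - 2) / w * a + d * (a - 1)) := by
  rw [mul_comm d]
  refine ⟨arithProgSemigroup.frobenius_notMem ha had, fun n hn => ?_⟩
  by_contra! hlt
  exact hn (arithProgSemigroup.mem_of_frobenius_lt (by omega) hw had hlt)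

/-- Frobenius number of an arithmetic progression: for `a ≥ 2`, `d ≥ 1`,
`w ≥ 1` with `gcd(a, d) = 1`, the largest natural number not in
`⟨a, a+d, …, a+w*d⟩` is `⌊(a-2)/w⌋ * a + d * (a-1)`. -/
theorem frobenius_arithmetic_progression (a d w : ℕ) (ha : 2 ≤ a)
    (hd : 1 ≤ d) (hw : 1 ≤ w) (had : Nat.gcd a d = 1) :
    IsGreatest
      {n : ℕ | n ∉ AddSubmonoid.closure {x : ℕ | ∃ i ≤ w, x = a + i * d}}
      ((a - 2) / w * a + d * (a - 1)) :=
  frobenius_arithmetic_progression_general a d w ha hw had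
end

section
/- Let a and b be coprime integers with a ≥ 2 and b ≥ 2, let k ≥ 1 be an integer, and let A_k(a,b) = {a^(k−i) · b^i : 0 ≤ i ≤ k} be the geometric sequence of generators. Define σ_r(a,b) = Σ_{i=0}^{r} a^(r−i) · b^i. Then the Frobenius number of the numerical semigroup ⟨A_k(a,b)⟩ is F = σ_{k+1}(a,b) − σ_k(a,b) − (a^(k+1) + b^(k+1)) (Tripathi's formula). -/
/-!
Since `A_{k+1}(a,b) = a • A_k(a,b) ∪ {b^(k+1)}`, the semigroup `S_{k+1}` is
`a S_k + ℕ b^(k+1)`. For a numerical semigroup `S` and `d ∈ S` coprime to `a`, every integer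
is uniquely `a m + c d` with `0 ≤ c < a`, and it lies in `a S + ℕ d` iff `m ∈ S`; hence the
Frobenius number obeys `F(a S + ℕ d) = a F(S) + (a - 1) d`. Starting from `F(ℕ) = -1`, this
recursion is solved by `F(S_k) = (a - 1) σ_k - a^(k+1) = σ_{k+1} - σ_k - (a^(k+1) + b^(k+1))`.
-/

/-- The sum `σ_r(a,b) = Σ_{i=0}^{r} a^(r-i) * b^i` of the geometric progression. -/
def sigma (a b r : ℕ) : ℕ := ∑ i ∈ Finset.range (r + 1), a ^ (r - i) * b ^ i

/-- The gaps of `S` read in `ℤ`, so that all negative integers count as gaps and the Frobenius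
number of `⊤ = ℕ` is `-1`. -/
def intGaps (S : AddSubmonoid ℕ) : Set ℤ := {z | ∀ n ∈ S, (n : ℤ) ≠ z}

lemma natCast_mem_intGaps {S : AddSubmonoid ℕ} {n : ℕ} :
    (n : ℤ) ∈ intGaps S ↔ n ∉ S := by
  refine ⟨fun h hn ↦ h n hn rfl, fun h m hm hmn ↦ h ?_⟩
  rwa [← Nat.cast_injective hmn]

lemma isGreatest_gaps_of_isGreatest_intGaps {S : AddSubmonoid ℕ} {N : ℕ}
    (hN : IsGreatest (intGaps S) N) : IsGreatest {n | n ∉ S} N :=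
  ⟨natCast_mem_intGaps.1 hN.1, fun _ hn ↦ by exact_mod_cast hN.2 (natCast_mem_intGaps.2 hn)⟩

lemma neg_one_le_of_mem_upperBounds_intGaps {S : AddSubmonoid ℕ} {F : ℤ}
    (hF : F ∈ upperBounds (intGaps S)) : -1 ≤ F :=
  hF fun n _ ↦ by omega

lemma exists_eq_mul_add_mul_of_coprime {a d : ℕ} (ha : 0 < a) (had : Nat.Coprime a d)
    (z : ℤ) : ∃ m : ℤ, ∃ c : ℕ, c < a ∧ z = a * m + c * d := by
  obtain ⟨u, v, huv⟩ := Nat.isCoprime_iff_coprime.2 had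
  have ha' : (0 : ℤ) < a := by exact_mod_cast ha
  refine ⟨z * u + z * v / a * d, (z * v % a).toNat,
    by have := Int.emod_lt_of_pos (z * v) ha'; omega, ?_⟩
  rw [Int.toNat_of_nonneg (Int.emod_nonneg _ ha'.ne'), Int.emod_def]
  linear_combination -z * huv

lemma isGreatest_intGaps_top : IsGreatest (intGaps ⊤) (-1) := by
  refine ⟨fun n _ ↦ by omega, fun z hz ↦ ?_⟩
  by_contra! hz0
  lift z to ℕ using by omega
  exact hz z (AddSubmonoid.mem_top z) rfl

section FrobeniusStep

variable {S : AddSubmonoid ℕ} {a d : ℕ}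

lemma mem_map_mulLeft_sup_closure_singleton {n : ℕ} :
    n ∈ S.map (AddMonoidHom.mulLeft a) ⊔ AddSubmonoid.closure {d} ↔
      ∃ m ∈ S, ∃ c : ℕ, a * m + c * d = n := by
  simp [AddSubmonoid.mem_sup, AddSubmonoid.mem_closure_singleton]

lemma mem_intGaps_map_mulLeft_sup_closure_singleton (had : Nat.Coprime a d) (hd : d ∈ S)
    {F : ℤ} (hF : F ∈ intGaps S) :
    a * F + (a - 1) * d ∈
      intGaps (S.map (AddMonoidHom.mulLeft a) ⊔ AddSubmonoid.closure {d}) := by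
  intro n hn hnF
  obtain ⟨m, hm, c, rfl⟩ := mem_map_mulLeft_sup_closure_singleton.1 hn
  push_cast at hnF
  -- `a ∣ (c + 1) d` forces `c + 1 = a s`, and then `F = m + (s - 1) d ∈ S`.
  have hdvd : (a : ℤ) ∣ (c + 1 : ℕ) * d :=
    ⟨F + d - m, by push_cast; linear_combination hnF⟩
  obtain ⟨s, hs⟩ := Int.natCast_dvd_natCast.1
    ((Nat.isCoprime_iff_coprime.2 had).dvd_of_dvd_mul_right hdvd)
  have hs0 : 0 < s := Nat.pos_of_ne_zero (by rintro rfl; omega)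
  have ha0 : (a : ℤ) ≠ 0 := by exact_mod_cast (by rintro rfl; omega : a ≠ 0)
  refine hF (m + (s - 1) * d) (S.add_mem hm (S.nsmul_mem hd _)) ?_
  have hcs : (c : ℤ) + 1 = a * s := by exact_mod_cast hs
  push_cast [Nat.cast_sub hs0]
  refine mul_left_cancel₀ ha0 ?_
  linear_combination hnF - d * hcs

lemma mem_upperBounds_intGaps_map_mulLeft_sup_closure_singleton (ha : 0 < a)
    (had : Nat.Coprime a d) {F : ℤ} (hF : F ∈ upperBounds (intGaps S)) :
    a * F + (a - 1) * d ∈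
      upperBounds (intGaps (S.map (AddMonoidHom.mulLeft a) ⊔ AddSubmonoid.closure {d})) := by
  intro z hz
  by_contra! hlt
  obtain ⟨m, c, hc, rfl⟩ := exists_eq_mul_add_mul_of_coprime ha had z
  have hFm : F < m := by
    have : (c : ℤ) ≤ a - 1 := by omega
    nlinarith
  have hm0 : 0 ≤ m := by have := neg_one_le_of_mem_upperBounds_intGaps hF; omega
  lift m to ℕ using hm0
  have hmS : m ∈ S := by_contra fun hmS ↦ not_le.2 hFm (hF (natCast_mem_intGaps.2 hmS))
  exact hz (a * m + c * d) (mem_map_mulLeft_sup_closure_singleton.2 ⟨m, hmS, c, rfl⟩)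
    (by push_cast; ring)

lemma isGreatest_intGaps_map_mulLeft_sup_closure_singleton (ha : 0 < a) (had : Nat.Coprime a d)
    (hd : d ∈ S) {F : ℤ} (hF : IsGreatest (intGaps S) F) :
    IsGreatest (intGaps (S.map (AddMonoidHom.mulLeft a) ⊔ AddSubmonoid.closure {d}))
      (a * F + (a - 1) * d) :=
  ⟨mem_intGaps_map_mulLeft_sup_closure_singleton had hd hF.1,
    mem_upperBounds_intGaps_map_mulLeft_sup_closure_singleton ha had hF.2⟩

end FrobeniusStep

section Geometric

variable {a b : ℕ}

lemma sigma_zero : sigma a b 0 = 1 := by simp [sigma]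

lemma sigma_succ (k : ℕ) : sigma a b (k + 1) = a * sigma a b k + b ^ (k + 1) := by
  rw [sigma, Finset.sum_range_succ, Nat.sub_self, pow_zero, one_mul, sigma, Finset.mul_sum]
  congr 1
  refine Finset.sum_congr rfl fun i hi ↦ ?_
  rw [Finset.mem_range] at hi
  rw [Nat.succ_sub (by omega), pow_succ]
  ring

lemma pow_succ_add_sigma_le (ha : 2 ≤ a) (hb : 2 ≤ b) {k : ℕ} (hk : 1 ≤ k) :
    a ^ (k + 1) + sigma a b k ≤ a * sigma a b k := by
  induction k, hk using Nat.le_induction with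
  | base =>
    simp only [sigma_succ, sigma_zero, zero_add, pow_one, mul_one, Nat.reduceAdd]
    nlinarith [Nat.mul_le_mul_right b ha, Nat.mul_le_mul_left a hb]
  | succ k _ ih =>
    rw [sigma_succ, pow_succ]
    nlinarith [Nat.mul_le_mul_left a ih, Nat.le_mul_of_pos_left (b ^ (k + 1)) (by omega : 0 < a)]

def geomSemigroup (a b k : ℕ) : AddSubmonoid ℕ :=
  AddSubmonoid.closure {x : ℕ | ∃ i ≤ k, x = a ^ (k - i) * b ^ i}

lemma geomSemigroup_zero : geomSemigroup a b 0 = ⊤ := by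
  simp [geomSemigroup]

lemma pow_mem_geomSemigroup (k : ℕ) : b ^ k ∈ geomSemigroup a b k :=
  AddSubmonoid.subset_closure ⟨k, le_rfl, by simp⟩

lemma pow_succ_mem_geomSemigroup (k : ℕ) : b ^ (k + 1) ∈ geomSemigroup a b k := by
  rw [pow_succ', ← smul_eq_mul]
  exact AddSubmonoid.nsmul_mem _ (pow_mem_geomSemigroup k) b

lemma geomSemigroup_succ (k : ℕ) :
    geomSemigroup a b (k + 1) =
      (geomSemigroup a b k).map (AddMonoidHom.mulLeft a) ⊔
        AddSubmonoid.closure {b ^ (k + 1)} := by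
  rw [geomSemigroup, geomSemigroup, AddMonoidHom.map_mclosure, ← AddSubmonoid.closure_union]
  congr 1
  ext x
  simp only [Set.mem_ofPred_eq, Set.mem_union, Set.mem_image, Set.mem_singleton_iff,
    AddMonoidHom.coe_mulLeft]
  constructor
  · rintro ⟨i, hi, rfl⟩
    rcases hi.lt_or_eq with hi | rfl
    · exact Or.inl ⟨a ^ (k - i) * b ^ i, ⟨i, by omega, rfl⟩, by
        rw [Nat.succ_sub (by omega), pow_succ]; ring⟩
    · simp
  · rintro (⟨y, ⟨i, hi, rfl⟩, rfl⟩ | rfl)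
    · exact ⟨i, by omega, by rw [Nat.succ_sub hi, pow_succ]; ring⟩
    · exact ⟨k + 1, le_rfl, by simp⟩

theorem isGreatest_intGaps_geomSemigroup (ha : 0 < a) (hab : Nat.Coprime a b) (k : ℕ) :
    IsGreatest (intGaps (geomSemigroup a b k)) ((a - 1) * sigma a b k - a ^ (k + 1)) := by
  induction k with
  | zero =>
    rw [geomSemigroup_zero, sigma_zero]
    convert isGreatest_intGaps_top using 1
    ring
  | succ k ih =>
    rw [geomSemigroup_succ]
    convert isGreatest_intGaps_map_mulLeft_sup_closure_singleton ha (hab.pow_right (k + 1))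
      (pow_succ_mem_geomSemigroup k) ih using 1
    rw [sigma_succ]
    push_cast
    ring

end Geometric

/-- Tripathi's formula: for coprime `a, b ≥ 2` and `k ≥ 1`, the Frobenius
number of the numerical semigroup generated by the geometric sequence
`A_k(a,b) = {a^(k-i) * b^i : 0 ≤ i ≤ k}` is
`σ_{k+1}(a,b) - σ_k(a,b) - (a^(k+1) + b^(k+1))`. -/
theorem frobenius_geometric_tripathi (a b k : ℕ) (ha : 2 ≤ a) (hb : 2 ≤ b)
    (hab : Nat.Coprime a b) (hk : 1 ≤ k) :
    IsGreatest
      {n : ℕ | n ∉ AddSubmonoid.closure {x : ℕ | ∃ i ≤ k, x = a ^ (k - i) * b ^ i}}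
      (sigma a b (k + 1) - sigma a b k - (a ^ (k + 1) + b ^ (k + 1))) := by
  have hle := pow_succ_add_sigma_le ha hb hk
  have hN : ((sigma a b (k + 1) - sigma a b k - (a ^ (k + 1) + b ^ (k + 1)) : ℕ) : ℤ) =
      (a - 1) * sigma a b k - a ^ (k + 1) := by
    rw [sigma_succ, Nat.sub_sub, Nat.cast_sub (by omega)]
    push_cast
    ring
  exact isGreatest_gaps_of_isGreatest_intGaps
    (hN ▸ isGreatest_intGaps_geomSemigroup (by omega) hab k)
end

section
/- Let a₁, a₂, a₃ be positive integers with gcd(a₁, a₂, a₃) = 1 and each a_i ≥ 2, let F be the Frobenius number of the numerical semigroup ⟨a₁, a₂, a₃⟩, and set f = F + a₁ + a₂ + a₃. Then f ≥ √(3·a₁·a₂·a₃) (Davison's lower bound). -/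
/-!
Write `b = a₂`, `c = a₃` and `f = F + a₁ + a₂ + a₃`. In each residue class mod `a₁` take the
lattice point `(y, z)` minimising `y b + z c` (ties broken by the smaller `y`). These `a₁` points
form a down-closed set `S ⊆ ℕ²`; their weights `y b + z c` are the Apéry set of `⟨a₁, a₂, a₃⟩`
with respect to `a₁`, so each is at most `F + a₁`, i.e. `(y + 1) b + (z + 1) c ≤ f` on `S`.

Every minimal point of `ℕ² \ S` off the axes lies in the class of `0`, and two incomparable such
points would let one of the points `(0, z)`, `(y, 0)` of `S` trade copies of `c` for copies of
`b` (or conversely) within its class without increasing its weight. So `S` is an L-shape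
`[0, y₁] × [0, z₁] ∪ [0, y₂] × [0, z₂]` with both corners in `S`, and counting its points gives
`a₁ b c ≤ A B + C D - C B` for `A = (y₁ + 1) b`, `B = (z₁ + 1) c`, `C = (y₂ + 1) b`,
`D = (z₂ + 1) c`, where `A + B ≤ f` and `C + D ≤ f`. The maximum of the right side under these
constraints is `f² / 3`.
-/

namespace Davison

/-- `(p.1 + 1, p.2 + 1)` is a minimal point of the complement of `s` off the axes. -/
def IsInnerCorner (s : Set (ℕ × ℕ)) (p : ℕ × ℕ) : Prop :=
  (p.1 + 1, p.2 + 1) ∉ s ∧ (p.1, p.2 + 1) ∈ s ∧ (p.1 + 1, p.2) ∈ s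

theorem exists_subset_Iic_union_Iic {s : Set (ℕ × ℕ)} (hs : IsLowerSet s) (h0 : (0, 0) ∈ s)
    (hbdd : BddAbove s) (hchain : IsChain (· ≤ ·) {p | IsInnerCorner s p}) :
    ∃ p ∈ s, ∃ q ∈ s, q.1 ≤ p.1 ∧ p.2 ≤ q.2 ∧ s ⊆ Set.Iic p ∪ Set.Iic q := by
  obtain ⟨B, hB⟩ := hbdd
  have down {y z y' z' : ℕ} (h : (y, z) ∈ s) (hy : y' ≤ y) (hz : z' ≤ z) : (y', z') ∈ s :=
    hs (Prod.mk_le_mk.2 ⟨hy, hz⟩) h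
  have row (z : ℕ) : BddAbove {y | (y, z) ∈ s} := ⟨B.1, fun _ h => (hB h).1⟩
  have col (y : ℕ) : BddAbove {z | (y, z) ∈ s} := ⟨B.2, fun _ h => (hB h).2⟩
  obtain ⟨y₁, hy₁, hy₁max⟩ := (row 0).exists_isGreatest_of_nonempty ⟨0, h0⟩
  obtain ⟨z₁, hz₁, hz₁max⟩ := (col y₁).exists_isGreatest_of_nonempty ⟨0, hy₁⟩
  obtain ⟨z₂, hz₂, hz₂max⟩ := (col 0).exists_isGreatest_of_nonempty ⟨0, h0⟩
  obtain ⟨y₂, hy₂, hy₂max⟩ := (row z₂).exists_isGreatest_of_nonempty ⟨0, hz₂⟩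
  refine ⟨(y₁, z₁), hz₁, (y₂, z₂), hy₂, hy₁max (down hy₂ le_rfl (Nat.zero_le _)),
    hz₂max (down hz₁ (Nat.zero_le _) le_rfl), fun ⟨y, z⟩ hyz => ?_⟩
  have hy : y ≤ y₁ := hy₁max (down hyz le_rfl (Nat.zero_le _))
  have hz : z ≤ z₂ := hz₂max (down hyz (Nat.zero_le _) le_rfl)
  by_contra! hout
  simp only [Set.mem_union, Set.mem_Iic, Prod.mk_le_mk, not_or, not_and_or, not_le] at hout
  have hy₂y : y₂ < y := by omega
  have hz₁z : z₁ < z := by omega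
  -- the top of column `y₂ + 1` and the end of row `z₁ + 1` are two incomparable inner corners
  obtain ⟨z₃, hz₃, hz₃max⟩ := (col (y₂ + 1)).exists_isGreatest_of_nonempty
    ⟨z₁ + 1, down hyz hy₂y hz₁z⟩
  obtain ⟨y₃, hy₃, hy₃max⟩ := (row (z₁ + 1)).exists_isGreatest_of_nonempty
    ⟨y₂ + 1, down hyz hy₂y hz₁z⟩
  have hz₃z₂ : z₃ < z₂ := by
    by_contra! h
    exact absurd (hy₂max (down hz₃ le_rfl h)) (by omega)
  have hy₃y₁ : y₃ < y₁ := by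
    by_contra! h
    exact absurd (hz₁max (down hy₃ h le_rfl)) (by omega)
  have corner₁ : IsInnerCorner s (y₂, z₃) :=
    ⟨fun h => by simpa using hz₃max h, down hy₂ le_rfl hz₃z₂, hz₃⟩
  have corner₂ : IsInnerCorner s (y₃, z₁) :=
    ⟨fun h => by simpa using hy₃max h, hy₃, down hz₁ hy₃y₁ le_rfl⟩
  have hy₂y₃ : y₂ < y₃ := hy₂y.trans_le (hy₃max (down hyz le_rfl hz₁z))
  have hz₁z₃ : z₁ < z₃ := hz₁z.trans_le (hz₃max (down hyz hy₂y le_rfl))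
  rcases hchain corner₁ corner₂ (by simp [hy₂y₃.ne]) with h | h <;>
    simp only [Prod.mk_le_mk] at h <;> omega

theorem card_Iic_union_Iic {p q : ℕ × ℕ} (h₁ : q.1 ≤ p.1) (h₂ : p.2 ≤ q.2) :
    (Finset.Iic p ∪ Finset.Iic q).card + (q.1 + 1) * (p.2 + 1) =
      (p.1 + 1) * (p.2 + 1) + (q.1 + 1) * (q.2 + 1) := by
  have hinter : Finset.Iic p ∩ Finset.Iic q = Finset.Iic (q.1, p.2) := by
    ext r
    simp only [Finset.mem_inter, Finset.mem_Iic, Prod.le_def]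
    omega
  have := Finset.card_union_add_card_inter (Finset.Iic p) (Finset.Iic q)
  simpa only [hinter, Finset.card_Iic_prod, Nat.card_Iic] using this

def weight (b c : ℕ) (p : ℕ × ℕ) : ℕ := p.1 * b + p.2 * c

def key (b c : ℕ) (p : ℕ × ℕ) : ℕ ×ₗ ℕ := toLex (weight b c p, p.1)

def leastReps (a b c : ℕ) : Set (ℕ × ℕ) :=
  {p | ∀ q, weight b c q ≡ weight b c p [MOD a] → key b c p ≤ key b c q}

section LeastReps

variable {a b c : ℕ}

theorem weight_add (p q : ℕ × ℕ) : weight b c (p + q) = weight b c p + weight b c q := by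
  simp only [weight, Prod.fst_add, Prod.snd_add]
  ring

theorem key_add (p q : ℕ × ℕ) : key b c (p + q) = key b c p + key b c q := by
  simp only [key, weight_add, Prod.fst_add]
  rfl

theorem key_injective (hc : 0 < c) : Function.Injective (key b c) := by
  intro p q h
  simp only [key, weight, EmbeddingLike.apply_eq_iff_eq, Prod.mk.injEq] at h
  obtain ⟨hw, h1⟩ := h
  rw [h1, add_right_inj] at hw
  exact Prod.ext h1 (Nat.eq_of_mul_eq_mul_right hc hw)

theorem isLowerSet_leastReps : IsLowerSet (leastReps a b c) := by
  intro p q hqp hp r hr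
  obtain ⟨d, rfl⟩ := exists_add_of_le hqp
  have h := hp (r + d) (by simpa only [weight_add] using hr.add_right (weight b c d))
  rw [key_add, key_add] at h
  exact le_of_add_le_add_right h

theorem zero_mem_leastReps : (0, 0) ∈ leastReps a b c := by
  intro q _
  simp only [key, weight, Prod.Lex.toLex_le_toLex]
  omega

theorem eq_of_mem_leastReps_of_modEq (hc : 0 < c) {p q : ℕ × ℕ} (hp : p ∈ leastReps a b c)
    (hq : q ∈ leastReps a b c) (h : weight b c p ≡ weight b c q [MOD a]) : p = q :=
  key_injective hc ((hp q h.symm).antisymm (hq p h))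

theorem exists_mem_leastReps_modEq (p : ℕ × ℕ) :
    ∃ q ∈ leastReps a b c, weight b c q ≡ weight b c p [MOD a] := by
  set cls := {q | weight b c q ≡ weight b c p [MOD a]}
  have hmem : Function.argminOn (key b c) cls ⟨p, rfl⟩ ∈ cls := Function.argminOn_mem _ _ _
  exact ⟨_, fun r hr => Function.argminOn_le (key b c) cls (hr.trans hmem), hmem⟩

theorem exists_weight_modEq (ha : 0 < a) (hgcd : Nat.gcd (Nat.gcd a b) c = 1) (r : ℕ) :
    ∃ p : ℕ × ℕ, weight b c p ≡ r [MOD a] := by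
  have : NeZero a := ⟨ha.ne'⟩
  obtain ⟨u, v, huv⟩ := Nat.isCoprime_iff_coprime.2 hgcd
  refine ⟨(((r * u * Nat.gcdB a b : ℤ) : ZMod a).val, ((r * v : ℤ) : ZMod a).val), ?_⟩
  rw [← ZMod.natCast_eq_natCast_iff]
  have h := congrArg (Int.cast : ℤ → ZMod a) huv
  push_cast [Nat.gcd_eq_gcd_ab, ZMod.natCast_self] at h
  simp only [weight, Nat.cast_add, Nat.cast_mul, ZMod.natCast_zmod_val]
  push_cast
  linear_combination (r : ZMod a) * h

theorem exists_mul_add_weight_eq_of_mem_closure {n : ℕ}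
    (h : n ∈ AddSubmonoid.closure ({a, b, c} : Set ℕ)) : ∃ x q, x * a + weight b c q = n := by
  rw [← Set.singleton_union, AddSubmonoid.closure_union, AddSubmonoid.mem_sup] at h
  obtain ⟨_, hx, _, hyz, rfl⟩ := h
  obtain ⟨x, rfl⟩ := AddSubmonoid.mem_closure_singleton.1 hx
  obtain ⟨y, z, rfl⟩ := (AddSubmonoid.mem_closure_pair _ _ _).1 hyz
  exact ⟨x, (y, z), by simp [weight]⟩

theorem weight_le_of_mem_leastReps (ha : 0 < a) {F : ℕ}
    (hF : F ∈ upperBounds {n | n ∉ AddSubmonoid.closure ({a, b, c} : Set ℕ)}) {p : ℕ × ℕ}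
    (hp : p ∈ leastReps a b c) : weight b c p ≤ F + a := by
  by_contra! hlt
  refine (hF (show weight b c p - a ∉ _ from fun hmem => ?_)).not_gt (by omega)
  obtain ⟨x, q, hq⟩ := exists_mul_add_weight_eq_of_mem_closure hmem
  have hpq : weight b c p = weight b c q + (x + 1) * a := by rw [add_mul, one_mul]; omega
  have h := hp q (by rw [hpq]; exact (Nat.add_mul_mod_self_right _ _ _).symm)
  simp only [key, Prod.Lex.toLex_le_toLex] at h
  omega

theorem eq_of_add_mem_leastReps (hc : 0 < c) {q r d : ℕ × ℕ} (hq : q ∈ leastReps a b c)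
    (hr : r + d ∈ leastReps a b c) (h : weight b c (r + d) ≡ weight b c (q + d) [MOD a]) :
    r = q := by
  rw [weight_add, weight_add] at h
  exact eq_of_mem_leastReps_of_modEq hc (isLowerSet_leastReps le_self_add hr) hq
    (Nat.ModEq.add_right_cancel' _ h)

theorem modEq_zero_of_isInnerCorner (hc : 0 < c) {y z : ℕ}
    (h : IsInnerCorner (leastReps a b c) (y, z)) : weight b c (y + 1, z + 1) ≡ 0 [MOD a] := by
  obtain ⟨hnot, hleft, hbelow⟩ := h
  -- a least representative with a positive coordinate, shifted down by one, would be a second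
  -- least representative of the class of a neighbour of the corner
  obtain ⟨⟨_ | k, l⟩, hr, hmod⟩ := exists_mem_leastReps_modEq (a := a) (y + 1, z + 1)
  · rcases l with _ | l
    · simpa [weight] using hmod.symm
    · have := eq_of_add_mem_leastReps (r := (0, l)) (d := (0, 1)) hc hbelow hr hmod
      simp at this
  · obtain ⟨rfl, rfl⟩ := Prod.mk.inj (eq_of_add_mem_leastReps (d := (1, 0)) hc hleft hr hmod)
    exact (hnot hr).elim

theorem le_of_isInnerCorner_of_lt (hc : 0 < c) {y z y' z' : ℕ}
    (h : IsInnerCorner (leastReps a b c) (y, z)) (h' : IsInnerCorner (leastReps a b c) (y', z'))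
    (hy : y < y') : z ≤ z' := by
  by_contra! hz
  obtain ⟨δ, rfl⟩ := Nat.exists_eq_add_of_lt hy
  obtain ⟨ε, rfl⟩ := Nat.exists_eq_add_of_lt hz
  have hmod : (δ + 1) * b ≡ (ε + 1) * c [MOD a] := by
    have := (modEq_zero_of_isInnerCorner hc h').trans (modEq_zero_of_isInnerCorner hc h).symm
    refine Nat.ModEq.add_left_cancel' ((y + 1) * b + (z' + 1) * c) ?_
    convert this using 1 <;> simp only [weight] <;> ring
  have h0 : (0, z' + ε + 1) ∈ leastReps a b c :=
    isLowerSet_leastReps (Prod.mk_le_mk.2 ⟨Nat.zero_le _, Nat.le_succ _⟩) h.2.1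
  have h1 : (y + δ + 1, 0) ∈ leastReps a b c :=
    isLowerSet_leastReps (Prod.mk_le_mk.2 ⟨Nat.le_succ _, Nat.zero_le _⟩) h'.2.2
  rcases lt_or_ge ((δ + 1) * b) ((ε + 1) * c) with hlt | hle
  · -- then `(δ + 1, z')` has smaller weight than `(0, z' + ε + 1)` in the same class
    have e : (z' + ε + 1) * c = (ε + 1) * c + z' * c := by ring
    have := h0 (δ + 1, z') (by simpa only [weight, e, zero_mul, zero_add] using hmod.add_right _)
    simp only [key, weight, Prod.Lex.toLex_le_toLex] at this
    omega
  · -- then `(y, ε + 1)` has at most the weight of `(y + δ + 1, 0)` in the same class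
    have e : (y + δ + 1) * b = y * b + (δ + 1) * b := by ring
    have := h1 (y, ε + 1)
      (by simpa only [weight, e, zero_mul, add_zero] using (hmod.add_left _).symm)
    simp only [key, weight, Prod.Lex.toLex_le_toLex] at this
    omega

theorem isChain_isInnerCorner_leastReps (hc : 0 < c) :
    IsChain (· ≤ ·) {p | IsInnerCorner (leastReps a b c) p} := by
  rintro ⟨y, z⟩ h ⟨y', z'⟩ h' -
  simp only [Prod.mk_le_mk]
  rcases lt_trichotomy y y' with hy | rfl | hy
  · exact Or.inl ⟨hy.le, le_of_isInnerCorner_of_lt hc h h' hy⟩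
  · exact (le_total z z').imp (⟨le_rfl, ·⟩) (⟨le_rfl, ·⟩)
  · exact Or.inr ⟨hy.le, le_of_isInnerCorner_of_lt hc h' h hy⟩

theorem bddAbove_leastReps (ha : 0 < a) (hb : 0 < b) (hc : 0 < c) {F : ℕ}
    (hF : F ∈ upperBounds {n | n ∉ AddSubmonoid.closure ({a, b, c} : Set ℕ)}) :
    BddAbove (leastReps a b c) := by
  refine ⟨(F + a, F + a), fun p hp => ?_⟩
  have hw := weight_le_of_mem_leastReps ha hF hp
  simp only [weight] at hw
  have := Nat.le_mul_of_pos_right p.1 hb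
  have := Nat.le_mul_of_pos_right p.2 hc
  exact Prod.mk_le_mk.2 ⟨by omega, by omega⟩

theorem le_card_of_leastReps_subset (ha : 0 < a) (hgcd : Nat.gcd (Nat.gcd a b) c = 1)
    {t : Finset (ℕ × ℕ)} (ht : leastReps a b c ⊆ t) : a ≤ t.card := by
  have hrep (r : ℕ) : ∃ p ∈ leastReps a b c, weight b c p ≡ r [MOD a] := by
    obtain ⟨p₀, hp₀⟩ := exists_weight_modEq ha hgcd r
    obtain ⟨p, hp, hpp₀⟩ := exists_mem_leastReps_modEq (a := a) (b := b) (c := c) p₀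
    exact ⟨p, hp, hpp₀.trans hp₀⟩
  choose f hf hfr using hrep
  calc a = (Finset.range a).card := (Finset.card_range a).symm
    _ ≤ t.card := Finset.card_le_card_of_injOn f (fun r _ => ht (hf r)) fun r hr r' hr' h =>
        ((hfr r).symm.trans (h ▸ hfr r')).eq_of_lt_of_lt (Finset.mem_range.1 hr)
          (Finset.mem_range.1 hr')

theorem add_mul_le_of_leastReps_subset (ha : 0 < a) (hgcd : Nat.gcd (Nat.gcd a b) c = 1)
    {p q : ℕ × ℕ} (h₁ : q.1 ≤ p.1) (h₂ : p.2 ≤ q.2)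
    (h : leastReps a b c ⊆ Set.Iic p ∪ Set.Iic q) :
    a + (q.1 + 1) * (p.2 + 1) ≤ (p.1 + 1) * (p.2 + 1) + (q.1 + 1) * (q.2 + 1) := by
  have := le_card_of_leastReps_subset ha hgcd (t := Finset.Iic p ∪ Finset.Iic q)
    (by simpa using h)
  have := card_Iic_union_Iic h₁ h₂
  omega

end LeastReps

theorem three_mul_le_sq {x A B C D f : ℕ} (hx : x + C * B ≤ A * B + C * D) (hAB : A + B ≤ f)
    (hCD : C + D ≤ f) : 3 * x ≤ f ^ 2 := by
  zify at *
  nlinarith [mul_le_mul_of_nonneg_left hAB (Int.natCast_nonneg B),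
    mul_le_mul_of_nonneg_left hCD (Int.natCast_nonneg C),
    sq_nonneg (2 * (f : ℤ) - 3 * B - 3 * C), sq_nonneg ((B : ℤ) - C)]

end Davison

open Davison in
/-- Davison's lower bound: for `a₁, a₂, a₃ ≥ 2` with `gcd(a₁, a₂, a₃) = 1`,
the modified Frobenius number `f = F(a₁,a₂,a₃) + a₁ + a₂ + a₃` satisfies
`f ≥ √(3·a₁·a₂·a₃)`. -/
theorem davison_lower_bound (a₁ a₂ a₃ : ℕ) (h1 : 2 ≤ a₁) (h2 : 2 ≤ a₂)
    (h3 : 2 ≤ a₃) (hgcd : Nat.gcd (Nat.gcd a₁ a₂) a₃ = 1)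
    (F : ℕ)
    (hF : IsGreatest {n : ℕ | n ∉ AddSubmonoid.closure ({a₁, a₂, a₃} : Set ℕ)} F) :
    Real.sqrt (3 * a₁ * a₂ * a₃) ≤ (F : ℝ) + a₁ + a₂ + a₃ := by
  have ha : 0 < a₁ := by omega
  have hc : 0 < a₃ := by omega
  obtain ⟨p, hp, q, hq, hqp, hpq, hcover⟩ := exists_subset_Iic_union_Iic isLowerSet_leastReps
    zero_mem_leastReps (bddAbove_leastReps ha (by omega) hc hF.2)
    (isChain_isInnerCorner_leastReps hc)
  have hcount := add_mul_le_of_leastReps_subset ha hgcd hqp hpq hcover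
  have hp' := weight_le_of_mem_leastReps ha hF.2 hp
  have hq' := weight_le_of_mem_leastReps ha hF.2 hq
  simp only [weight] at hp' hq'
  have hsq := three_mul_le_sq (x := a₁ * a₂ * a₃) (A := (p.1 + 1) * a₂) (B := (p.2 + 1) * a₃)
    (C := (q.1 + 1) * a₂) (D := (q.2 + 1) * a₃) (f := F + a₁ + a₂ + a₃)
    (by nlinarith [Nat.mul_le_mul_right (a₂ * a₃) hcount]) (by linarith) (by linarith)
  have hf : 3 * a₁ * a₂ * a₃ ≤ (F + a₁ + a₂ + a₃) ^ 2 := by linarith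
  rw [Real.sqrt_le_iff]
  exact ⟨by positivity, by exact_mod_cast hf⟩
end
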